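/- Let (s_0,...,s_n) ∈ N^{n+1} be positive integers with s_0 = 1 such that the lattice Λ_n = {z ∈ Z^{n+1} : ∑ s_i z_i = 0} has minimum squared norm ≥ μ and s_i ≤ √μ·(μ+n/4)^{n/2}·π^{n/2}/(n/2)! for all i. Then the density Δ(Λ_n) = √(min(Λ_n)^n/(4^n det Λ_n))·π^{n/2}/(n/2)! satisfies Δ(Λ_n) ≥ (1+n/(4μ))^{-n/2}/(2^n √((n+1)μ)). -/
import Mathlib

theorem stmt7 (n μ : ℕ) (hn : 1 ≤ n) (hμ : 0 < μ)
    (s : Fin (n + 1) → ℕ) (hs : ∀ i, 0 < s i) (hs0 : s 0 = 1)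
    (hmin : ∀ z : Fin (n + 1) → ℤ, z ≠ 0 → (∑ i, (s i : ℤ) * z i) = 0 →
      (μ : ℤ) ≤ ∑ i, z i ^ 2)
    (hbound : ∀ i, (s i : ℝ) ≤ Real.sqrt (μ : ℝ) * Real.sqrt ((μ : ℝ) + n / 4) ^ n *
      Real.pi ^ ((n : ℝ) / 2) / Real.Gamma ((n : ℝ) / 2 + 1))
    (m : ℤ)
    (hm : IsLeast {k : ℤ | ∃ z : Fin (n + 1) → ℤ, z ≠ 0 ∧
      (∑ i, (s i : ℤ) * z i) = 0 ∧ k = ∑ i, z i ^ 2} m) :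
    ((1 + (n : ℝ) / (4 * μ)) ^ ((n : ℝ) / 2))⁻¹ / (2 ^ n * Real.sqrt ((n + 1) * μ))
      ≤ Real.sqrt ((m : ℝ) ^ n / (4 ^ n * ∑ i, (s i : ℝ) ^ 2)) *
        (Real.pi ^ ((n : ℝ) / 2) / Real.Gamma ((n : ℝ) / 2 + 1)) := by
  -- notation
  set Γ : ℝ := Real.Gamma ((n : ℝ) / 2 + 1) with hΓdef
  have hΓ : 0 < Γ := Real.Gamma_pos_of_pos (by positivity)
  set Q : ℝ := Real.pi ^ ((n : ℝ) / 2) with hQdef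
  have hQ : 0 < Q := Real.rpow_pos_of_pos Real.pi_pos _
  set c : ℝ := (μ : ℝ) + n / 4 with hcdef
  have hc : 0 < c := by positivity
  set B : ℝ := Real.sqrt (μ : ℝ) * Real.sqrt c ^ n * Q / Γ with hBdef
  have hB : 0 ≤ B := by positivity
  set D : ℝ := ∑ i, (s i : ℝ) ^ 2 with hDdef
  -- μ ≤ m
  obtain ⟨⟨z, hz, hsz, hmz⟩, -⟩ := hm
  have hμm : (μ : ℝ) ≤ (m : ℝ) := by
    exact_mod_cast hmz ▸ hmin z hz hsz
  have hmpos : (0 : ℝ) < (m : ℝ) := lt_of_lt_of_le (by exact_mod_cast hμ) hμm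
  -- D bounds
  have hD1 : (1 : ℝ) ≤ D := by
    have := Finset.single_le_sum (f := fun i => ((s i : ℝ)) ^ 2)
      (fun i _ => by positivity) (Finset.mem_univ (0 : Fin (n + 1)))
    simpa [hs0] using this
  have hDpos : (0 : ℝ) < D := lt_of_lt_of_le one_pos hD1
  have hDle : D ≤ (n + 1) * B ^ 2 := by
    calc D ≤ ∑ _i : Fin (n + 1), B ^ 2 := by
          apply Finset.sum_le_sum
          intro i _
          exact pow_le_pow_left₀ (by positivity) (hbound i) 2
      _ = (n + 1) * B ^ 2 := by
          simp [Finset.sum_const, nsmul_eq_mul]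
  -- squares
  have hB2 : B ^ 2 = (μ : ℝ) * c ^ n * Q ^ 2 / Γ ^ 2 := by
    rw [hBdef]
    rw [div_pow, mul_pow, mul_pow, ← pow_mul, Nat.mul_comm n 2, pow_mul,
      Real.sq_sqrt (by positivity : (0:ℝ) ≤ (μ:ℝ)), Real.sq_sqrt hc.le]
  have hx : (0 : ℝ) < 1 + (n : ℝ) / (4 * μ) := by positivity
  have hxc : 1 + (n : ℝ) / (4 * μ) = c / μ := by
    rw [hcdef]; field_simp
  have hx2 : ((1 + (n : ℝ) / (4 * μ)) ^ ((n : ℝ) / 2)) ^ 2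
      = (1 + (n : ℝ) / (4 * μ)) ^ n := by
    rw [← Real.rpow_natCast ((1 + (n : ℝ) / (4 * μ)) ^ ((n : ℝ) / 2)) 2,
      ← Real.rpow_natCast (1 + (n : ℝ) / (4 * μ)) n,
      ← Real.rpow_mul hx.le]
    norm_num
  -- reduce goal to squares
  have hgoal : Real.sqrt ((m : ℝ) ^ n / (4 ^ n * D)) * (Q / Γ)
      = Real.sqrt ((m : ℝ) ^ n / (4 ^ n * D) * (Q / Γ) ^ 2) := by
    rw [Real.sqrt_mul (by positivity), Real.sqrt_sq (by positivity)]
  rw [hgoal, Real.le_sqrt (by positivity) (by positivity)]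
  have hsq : (((1 + (n : ℝ) / (4 * μ)) ^ ((n : ℝ) / 2))⁻¹ /
      (2 ^ n * Real.sqrt ((n + 1) * μ))) ^ 2
      = ((1 + (n : ℝ) / (4 * μ)) ^ n)⁻¹ / (4 ^ n * ((n + 1) * μ)) := by
    rw [div_pow, mul_pow, inv_pow, hx2, Real.sq_sqrt (by positivity),
      show ((2:ℝ)^n)^2 = 4^n by rw [← pow_mul, mul_comm n 2, pow_mul]; norm_num]
  rw [hsq]
  -- chain
  have step1 : (μ : ℝ) ^ n / (4 ^ n * ((n + 1) * B ^ 2)) * (Q / Γ) ^ 2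
      ≤ (m : ℝ) ^ n / (4 ^ n * D) * (Q / Γ) ^ 2 := by
    apply mul_le_mul_of_nonneg_right _ (by positivity)
    apply div_le_div₀ (by positivity) (pow_le_pow_left₀ (by positivity) hμm n)
      (by positivity)
    have hB2pos : 0 < B ^ 2 := by
      rw [hB2]; positivity
    exact mul_le_mul_of_nonneg_left hDle (by positivity)
  refine le_trans (le_of_eq ?_) step1
  rw [hxc, hB2, div_pow]
  field_simp
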